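/- Let n ≥ 3 and let λ = λ¹.λ² be a bipartition of 2n−6. Then λ is of the form (n−i−2)(n−j−1).2^{i−1}1^{j−i−1} with 0 < i < j < n if and only if the Young diagram of λ² is contained in the rectangle 2^{n−3} (that is, λ² has at most n−3 parts, each at most 2) and λ¹ is the conjugate (transpose) of the 180°-rotation of the complement of λ² inside the rectangle 2^{n−3}. -/

import Mathlib

open scoped Classical

noncomputable section

/-- A partition: an antitone, eventually zero sequence of natural numbers.
`parts k` is the `(k+1)`-st part `λ_{k+1}`. -/
structure Partition' where
  parts : ℕ → ℕ
  antitone' : Antitone parts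
  exists_zero : ∃ N, parts N = 0

namespace Partition'

lemma sorted_getD_antitone {l : List ℕ} (h : l.Pairwise (· ≥ ·)) :
    Antitone (fun k => l.getD k 0) := by
  intro i j hij
  simp only
  rcases lt_or_ge j l.length with hj | hj
  · have hi : i < l.length := lt_of_le_of_lt hij hj
    rw [List.getD_eq_getElem l 0 hj, List.getD_eq_getElem l 0 hi]
    rcases eq_or_lt_of_le hij with rfl | hlt
    · exact le_rfl
    · exact List.pairwise_iff_getElem.mp h i j hi hj hlt
  · rw [List.getD_eq_default l 0 hj]
    exact Nat.zero_le _

/-- The partition whose multiset of (nonzero) parts is the multiset of nonzero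
elements of `m`. -/
def ofMul (m : Multiset ℕ) : Partition' where
  parts := fun k => ((m.sort (· ≤ ·)).reverse).getD k 0
  antitone' := by
    apply sorted_getD_antitone
    rw [List.pairwise_reverse]
    exact Multiset.pairwise_sort (s := m) (r := (· ≤ ·))
  exists_zero := ⟨((m.sort (· ≤ ·)).reverse).length, List.getD_eq_default _ _ le_rfl⟩

/-- The size `|λ|` of a partition: the sum of its parts. -/
def size (p : Partition') : ℕ := ∑ i ∈ Finset.range (Nat.find p.exists_zero), p.parts i

lemma finite_gt (p : Partition') (k : ℕ) : {i : ℕ | k < p.parts i}.Finite := by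
  obtain ⟨N, hN⟩ := p.exists_zero
  apply (Set.finite_Iio N).subset
  intro i hi
  simp only [Set.mem_setOf_eq] at hi
  by_contra hc
  simp only [Set.mem_Iio, not_lt] at hc
  have := p.antitone' hc
  omega

/-- The conjugate (transpose) partition. -/
def conj (p : Partition') : Partition' where
  parts := fun k => {i : ℕ | k < p.parts i}.ncard
  antitone' := fun a b hab =>
    Set.ncard_le_ncard (fun i hi => lt_of_le_of_lt hab hi) (p.finite_gt a)
  exists_zero := by
    refine ⟨p.parts 0, ?_⟩
    have h : {i : ℕ | p.parts 0 < p.parts i} = ∅ := by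
      ext i
      simp only [Set.mem_setOf_eq, Set.mem_empty_iff_false, iff_false, not_lt]
      exact p.antitone' (Nat.zero_le i)
    show {i : ℕ | p.parts 0 < p.parts i}.ncard = 0
    rw [h, Set.ncard_empty]

/-- The 180°-rotation of the complement of `p` inside the rectangle with
`rows` rows of length `c`: the partition `(c - p_rows, c - p_{rows-1}, …, c - p₁)`. -/
def rotCompl (c rows : ℕ) (p : Partition') : Partition' where
  parts := fun k => if k < rows then c - p.parts (rows - 1 - k) else 0
  antitone' := by
    intro a b hab
    by_cases hb : b < rows
    · have ha : a < rows := lt_of_le_of_lt hab hb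
      simp only [if_pos hb, if_pos ha]
      exact Nat.sub_le_sub_left (p.antitone' (by omega)) c
    · simp only [if_neg hb]
      exact Nat.zero_le _
  exists_zero := ⟨rows, by simp⟩

end Partition'

/-- A bipartition: a pair of partitions. -/
abbrev Bipartition := Partition' × Partition'

/-- The size of a bipartition. -/
def Bipartition.size (l : Bipartition) : ℕ := l.1.size + l.2.size

/-- The bipartition whose components have parts the multisets `a` and `b`. -/
def bip (a b : Multiset ℕ) : Bipartition := (Partition'.ofMul a, Partition'.ofMul b)

/-- The multiset of parts of the partition `a 1^b` (one part `a`, then `b` parts `1`). -/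
def hook (a b : ℕ) : Multiset ℕ := a ::ₘ Multiset.replicate b 1

/-- The charged β-set of a partition, as a sequence:
`betaSet p s i = λ_{i+1} + s - (i+1) + 1`. -/
def betaSet (p : Partition') (s : ℤ) (i : ℕ) : ℤ := (p.parts i : ℤ) + s - i

/-- The charged symbol of a bipartition with charge `σ`, as a pair of subsets of `ℤ`. -/
def symbolOf (l : Bipartition) (σ : ℤ × ℤ) : Set ℤ × Set ℤ :=
  (Set.range (betaSet l.1 σ.1), Set.range (betaSet l.2 σ.2))

/-- The charge `σ_t`. -/
def sigmaT (t : ℕ) : ℤ × ℤ :=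
  if Even t then ((t : ℤ), -1 - (t : ℤ)) else (-1 - (t : ℤ), (t : ℤ))

/-- The trivial symbol `({0,-1,-2,…},{-1,-2,-3,…})`, the symbol of the empty
bipartition with charge `σ₀ = (0,-1)`. -/
def trivialSymbol : Set ℤ × Set ℤ := ({z : ℤ | z ≤ 0}, {z : ℤ | z ≤ -1})

/-- Removing one `n`-co-hook from the symbol `Λ`, yielding `Λ'`: remove `x+n` from one
row, adjoin `x` to the other row, and exchange the two rows. -/
def CohookStep (n : ℕ) (Λ Λ' : Set ℤ × Set ℤ) : Prop :=
  (∃ x : ℤ, x + n ∈ Λ.1 ∧ x ∉ Λ.2 ∧ Λ' = (Λ.2 ∪ {x}, Λ.1 \ {x + n})) ∨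
  (∃ x : ℤ, x + n ∈ Λ.2 ∧ x ∉ Λ.1 ∧ Λ' = (Λ.2 \ {x + n}, Λ.1 ∪ {x}))

/-- `C` is the `n`-co-core of `Λ`: it is obtained from `Λ` by recursively removing
`n`-co-hooks, and no further `n`-co-hook can be removed. -/
def IsCocore (n : ℕ) (Λ C : Set ℤ × Set ℤ) : Prop :=
  Relation.ReflTransGen (CohookStep n) Λ C ∧ ∀ C', ¬ CohookStep n C C'

/-- Number of entries of the charged β-set of `p` that are `≥ α` (with multiplicity). -/
def betaCountGE (p : Partition') (s α : ℤ) : ℕ := Nat.card {i : ℕ // α ≤ betaSet p s i}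

/-- Number of entries `≥ α`, with multiplicity, of the multiset union of the two rows
of the symbol of `l` with charge `σ`. -/
def symCountGE (l : Bipartition) (σ : ℤ × ℤ) (α : ℤ) : ℕ :=
  betaCountGE l.1 σ.1 α + betaCountGE l.2 σ.2 α

/-- The composition `ϖ_Λ` of the symbol of `l` with charge `σ`: `comp l σ k` is the
`(k+1)`-st largest entry (with multiplicity) of the multiset union of the two rows. -/
def comp (l : Bipartition) (σ : ℤ × ℤ) (k : ℕ) : ℤ :=
  sSup {z : ℤ | k + 1 ≤ symCountGE l σ z}

/-- All partial sums of the composition of the symbol `(l,σ)` are bounded by those of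
`(m,τ)`. -/
def DomLE (l : Bipartition) (σ : ℤ × ℤ) (m : Bipartition) (τ : ℤ × ℤ) : Prop :=
  ∀ j : ℕ, ∑ k ∈ Finset.range j, comp l σ k ≤ ∑ k ∈ Finset.range j, comp m τ k

/-- Strict dominance `Λ ⊲ Λ'` of symbols: the compositions differ and all partial sums
of the first are bounded by those of the second. -/
def DomLT (l : Bipartition) (σ : ℤ × ℤ) (m : Bipartition) (τ : ℤ × ℤ) : Prop :=
  comp l σ ≠ comp m τ ∧ DomLE l σ m τ

/-- A box `(x, y, j)` (0-indexed row `x`, 0-indexed column `y`, component `j`: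
`j = 0` is the first component, `j = 1` the second). -/
abbrev Box := ℕ × ℕ × Fin 2

/-- The component of a bipartition selected by `j : Fin 2`. -/
def Bipartition.partsOf (l : Bipartition) (j : Fin 2) : Partition' := if j = 0 then l.1 else l.2

/-- Membership of a box in the Young diagram of a bipartition. -/
def MemY (l : Bipartition) (b : Box) : Prop := b.2.1 < (l.partsOf b.2.2).parts b.1

/-- The entry of the charge `σ` corresponding to component `j`. -/
def chargeOf (σ : ℤ × ℤ) (j : Fin 2) : ℤ := if j = 0 then σ.1 else σ.2

/-- The charged content `co^σ(b) = y - x + σ_j` of a box. -/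
def content (σ : ℤ × ℤ) (b : Box) : ℤ := (b.2.1 : ℤ) - (b.1 : ℤ) + chargeOf σ b.2.2

/-- `j(b) ∈ {1,2}`: the component of a box, numbered 1 or 2. -/
def jval (b : Box) : ℕ := (b.2.2 : ℕ) + 1

/-- The counting function of the Dunkl–Griffeth order. -/
def dgCount (l : Bipartition) (s : ℤ × ℤ) (d : ℕ) (α : ℝ) (j : ℕ) : ℕ :=
  Nat.card {b : Box // MemY l b ∧
    (α < (content s b : ℝ) - (jval b : ℝ) * (d : ℝ) / 2 ∨
      ((content s b : ℝ) - (jval b : ℝ) * (d : ℝ) / 2 = α ∧ jval b ≤ j))}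

/-- The Dunkl–Griffeth order `λ ⪯_s μ` (with respect to `d`). -/
def DGLE (l m : Bipartition) (s : ℤ × ℤ) (d : ℕ) : Prop :=
  ∀ (α : ℝ), ∀ j ∈ ({1, 2} : Set ℕ), dgCount l s d α j ≤ dgCount m s d α j

/-- A box of the extended Young diagram: rows are infinite to the left, so the column
coordinate is an integer.  `(x, y, j)` is the box in (0-indexed) row `x`, with integer
column coordinate `y` (`y = 0` is the first column), in component `j`. -/
abbrev ExtBox := ℕ × ℤ × Fin 2

/-- Membership in the extended Young diagram of a bipartition. -/
def MemExtY (l : Bipartition) (b : ExtBox) : Prop :=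
  b.2.1 < ((l.partsOf b.2.2).parts b.1 : ℤ)

/-- The charged content of an extended box. -/
def contentExt (σ : ℤ × ℤ) (b : ExtBox) : ℤ := b.2.1 - (b.1 : ℤ) + chargeOf σ b.2.2

/-- `b` is a removable box of the bipartition `l`. -/
def Removable (l : Bipartition) (b : Box) : Prop :=
  (l.partsOf b.2.2).parts b.1 = b.2.1 + 1 ∧ (l.partsOf b.2.2).parts (b.1 + 1) ≤ b.2.1

/-- `b` is an addable box of the bipartition `l`. -/
def Addable (l : Bipartition) (b : Box) : Prop :=
  (l.partsOf b.2.2).parts b.1 = b.2.1 ∧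
    (b.1 = 0 ∨ b.2.1 + 1 ≤ (l.partsOf b.2.2).parts (b.1 - 1))

/-- The order in which boxes are listed in the `i`-word: increasing charged content,
a component-2 box preceding a component-1 box of equal charged content. -/
def BoxLT (σ : ℤ × ℤ) (b b' : Box) : Prop :=
  content σ b < content σ b' ∨
    (content σ b = content σ b' ∧ b.2.2 = 1 ∧ b'.2.2 = 0)

/-- `L` is the list of boxes underlying the `i`-word of `(l, σ)` with respect to `d`:
it lists, in increasing order, exactly the addable and removable boxes of `l` whose
charged content is congruent to `i` modulo `d`. -/
def IsIWord (l : Bipartition) (σ : ℤ × ℤ) (d : ℕ) (i : ZMod d) (L : List Box) : Prop :=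
  L.Pairwise (BoxLT σ) ∧
    ∀ b : Box, b ∈ L ↔ ((Addable l b ∨ Removable l b) ∧ ((content σ b : ZMod d) = i))

/-- The sign of a box in the `i`-word: `true` (`+`) for addable, `false` (`−`) for
removable boxes. -/
def signOf (l : Bipartition) (b : Box) : Bool := if Addable l b then true else false

/-- One reduction step on words: delete an adjacent pair `−+`. -/
def RedStep (w w' : List Bool) : Prop :=
  ∃ u v : List Bool, w = u ++ false :: true :: v ∧ w' = u ++ v

/-- `ẽ_i l = 0`: the reduced `i`-word of `(l, σ)` contains no `−`, i.e. the `i`-word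
reduces to a word consisting only of `+`'s. -/
def AnnihilatedE (l : Bipartition) (σ : ℤ × ℤ) (d : ℕ) (i : ZMod d) : Prop :=
  ∃ L : List Box, IsIWord l σ d i L ∧
    ∃ a : ℕ, Relation.ReflTransGen RedStep (L.map (signOf l)) (List.replicate a true)

/-- `q` is obtained from the partition `p` by adding one box. -/
def PCovers (p q : Partition') : Prop :=
  ∃ x : ℕ, q.parts x = p.parts x + 1 ∧ ∀ y : ℕ, y ≠ x → q.parts y = p.parts y

/-- `m` is obtained from the bipartition `l` by adding one box to its Young diagram. -/
def BipCovers (l m : Bipartition) : Prop :=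
  (PCovers l.1 m.1 ∧ m.2 = l.2) ∨ (m.1 = l.1 ∧ PCovers l.2 m.2)

/-- `A(l) = Σ_μ μ`, the sum over all bipartitions obtained from `l` by adding one box,
as an element of the group of `ℤ`-valued functions on bipartitions. -/
def addB (l : Bipartition) : Bipartition → ℤ := fun m => if BipCovers l m then 1 else 0

/-- The projection `π_S` onto the span of the bipartitions lying in `S`. -/
def projS (S : Set Bipartition) (f : Bipartition → ℤ) : Bipartition → ℤ :=
  fun m => if m ∈ S then f m else 0

/-- The basis element of `ℤ[BP]` corresponding to a bipartition. -/
def deltaB (l : Bipartition) : Bipartition → ℤ := fun m => if m = l then 1 else 0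

/-- The bipartitions of `2n` labelling the principal-series unipotent characters in
the principal `Φ_{2n}`-block. -/
def PS (n : ℕ) : Set Bipartition :=
  {l | (∃ i j : ℕ, 0 < i ∧ i < n ∧ j ≤ n ∧
          l = bip (hook (n - i) j) (hook (n - j + 1) (i - 1))) ∨
       (∃ j : ℕ, j < 2 * n ∧ l = bip (hook (2 * n - j) j) 0) ∨
       (∃ i : ℕ, 0 < i ∧ i ≤ 2 * n ∧ l = bip 0 (hook (2 * n - i + 1) (i - 1)))}

/-- The bipartitions of `2n-2` labelling the `B₂`-series unipotent characters in the
principal `Φ_{2n}`-block: `2^i 1^{j-i-1} . (n-i-1)(n-j)` for `0 ≤ i < j ≤ n`. -/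
def LB2 (n : ℕ) : Set Bipartition :=
  {l | ∃ i j : ℕ, i < j ∧ j ≤ n ∧
        l = bip (Multiset.replicate i 2 + Multiset.replicate (j - i - 1) 1)
                {n - i - 1, n - j}}

/-- The bipartitions of `2n-6` labelling the `B₆`-series unipotent characters in the
principal `Φ_{2n}`-block: `(n-i-2)(n-j-1) . 2^{i-1} 1^{j-i-1}` for `0 < i < j < n`. -/
def LB6 (n : ℕ) : Set Bipartition :=
  {l | ∃ i j : ℕ, 0 < i ∧ i < j ∧ j < n ∧
        l = bip {n - i - 2, n - j - 1}
                (Multiset.replicate (i - 1) 2 + Multiset.replicate (j - i - 1) 1)}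

end


/-!
Both sides say that `λ²` is a two-column partition `2^a 1^{b-a}` with `a ≤ b ≤ n - 3` and
`λ¹ = (n-3-a)(n-3-b)`: the rotated complement of `2^a 1^{b-a}` in `2^{n-3}` is
`2^{n-3-b} 1^{b-a}`, whose conjugate is `(n-3-a)(n-3-b)`. On the side of `LB6 n` this is the
reparametrisation `i = a + 1`, `j = b + 2`.
-/

/-- The parts of the two-column partition `2^a 1^{b-a}`. -/
def twoColumnParts (a b k : ℕ) : ℕ := if k < a then 2 else if k < b then 1 else 0

/-- The parts of the partition `x y` with at most two rows. -/
def twoRowParts (x y k : ℕ) : ℕ := if k = 0 then x else if k = 1 then y else 0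

namespace Partition'

lemma ext_parts {p q : Partition'} (h : p.parts = q.parts) : p = q := by
  cases p; cases q; simpa using h

lemma parts_ofMul_coe {L : List ℕ} (h : L.Pairwise (· ≥ ·)) (k : ℕ) :
    (ofMul L).parts k = L.getD k 0 := by
  have hsort : (L : Multiset ℕ).sort (· ≤ ·) = L.reverse := by
    refine List.Perm.eq_of_pairwise' (r := (· ≤ ·)) (Multiset.pairwise_sort _ _) ?_ ?_
    · rwa [List.pairwise_reverse]
    · exact (Multiset.coe_eq_coe.mp (Multiset.sort_eq _ _)).trans (List.reverse_perm L).symm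
  simp [ofMul, hsort]

lemma parts_ofMul_pair {x y : ℕ} (hxy : y ≤ x) :
    (ofMul {x, y}).parts = twoRowParts x y := by
  funext k
  rw [show ({x, y} : Multiset ℕ) = ([x, y] : List ℕ) from rfl,
    parts_ofMul_coe (by simpa [List.pairwise_cons] using hxy)]
  rcases k with _ | _ | k <;> simp [twoRowParts]

lemma parts_ofMul_replicate_two_add_replicate_one (a c : ℕ) :
    (ofMul (Multiset.replicate a 2 + Multiset.replicate c 1)).parts =
      twoColumnParts a (a + c) := by
  funext k
  have hsorted : (List.replicate a 2 ++ List.replicate c 1).Pairwise (· ≥ ·) := by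
    refine List.pairwise_append.mpr ⟨List.pairwise_replicate.mpr (.inr le_rfl),
      List.pairwise_replicate.mpr (.inr le_rfl), fun x hx y hy => ?_⟩
    rw [List.eq_of_mem_replicate hx, List.eq_of_mem_replicate hy]
    omega
  rw [show Multiset.replicate a 2 + Multiset.replicate c 1 =
      ((List.replicate a 2 ++ List.replicate c 1 : List ℕ) : Multiset ℕ) by
    simp only [← Multiset.coe_replicate, Multiset.coe_add], parts_ofMul_coe hsorted]
  unfold twoColumnParts
  rcases lt_or_ge k a with hka | hka
  · rw [List.getD_append _ _ _ _ (by simpa using hka), List.getD_replicate _ hka, if_pos hka]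
  · rw [List.getD_append_right _ _ _ _ (by simpa using hka), List.length_replicate,
      if_neg (by omega)]
    rcases lt_or_ge k (a + c) with hkc | hkc
    · rw [List.getD_replicate _ (by omega), if_pos hkc]
    · rw [List.getD_eq_default _ _ (by rw [List.length_replicate]; omega), if_neg (by omega)]

lemma parts_rotCompl_two {q : Partition'} {a b m : ℕ} (hab : a ≤ b) (hbm : b ≤ m)
    (hq : q.parts = twoColumnParts a b) :
    (rotCompl 2 m q).parts = twoColumnParts (m - b) (m - a) := by
  funext k
  show (if k < m then 2 - q.parts (m - 1 - k) else 0) = _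
  simp only [hq, twoColumnParts]
  split_ifs <;> omega

lemma parts_conj_of_twoColumn {p : Partition'} {a b : ℕ} (hab : a ≤ b)
    (hp : p.parts = twoColumnParts a b) :
    p.conj.parts = twoRowParts b a := by
  funext k
  have hrows : {i : ℕ | k < p.parts i} = Set.Iio (twoRowParts b a k) := by
    ext i
    simp only [Set.mem_ofPred_eq, Set.mem_Iio, hp, twoColumnParts, twoRowParts]
    split_ifs <;> omega
  show {i : ℕ | k < p.parts i}.ncard = _
  simp [hrows]

lemma exists_parts_eq_twoColumn {q : Partition'} {m : ℕ} (hq₂ : ∀ k, q.parts k ≤ 2)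
    (hqm : ∀ k, m ≤ k → q.parts k = 0) :
    ∃ a b, a ≤ b ∧ b ≤ m ∧ q.parts = twoColumnParts a b := by
  have hex₀ : ∃ k, q.parts k = 0 := ⟨m, hqm m le_rfl⟩
  have hex₁ : ∃ k, q.parts k ≤ 1 := ⟨m, by simp [hqm m le_rfl]⟩
  refine ⟨Nat.find hex₁, Nat.find hex₀, Nat.find_min' hex₁ (by simp [Nat.find_spec hex₀]),
    Nat.find_min' hex₀ (hqm m le_rfl), funext fun k => ?_⟩
  have h₁ := Nat.find_spec hex₁
  have h₀ := Nat.find_spec hex₀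
  unfold twoColumnParts
  split_ifs with hka hkb
  · have := Nat.find_min hex₁ hka
    have := hq₂ k
    omega
  · have := q.antitone' (not_lt.mp hka)
    have := Nat.find_min hex₀ hkb
    omega
  · have := q.antitone' (not_lt.mp hkb)
    omega

end Partition'

open Partition'

lemma mem_LB6_add_three_iff (m : ℕ) (l : Bipartition) :
    l ∈ LB6 (m + 3) ↔ ∃ a b, a ≤ b ∧ b ≤ m ∧
      l.1.parts = twoRowParts (m - a) (m - b) ∧ l.2.parts = twoColumnParts a b := by
  constructor
  · rintro ⟨i, j, hi, hij, hjn, rfl⟩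
    refine ⟨i - 1, j - 2, by omega, by omega, ?_, ?_⟩
    · rw [bip, parts_ofMul_pair (by omega)]
      congr 1 <;> omega
    · rw [bip, parts_ofMul_replicate_two_add_replicate_one]
      congr 1; omega
  · rintro ⟨a, b, hab, hbm, h₁, h₂⟩
    refine ⟨a + 1, b + 2, by omega, by omega, by omega, Prod.ext (ext_parts ?_) (ext_parts ?_)⟩
    · rw [h₁, bip, parts_ofMul_pair (by omega)]
      congr 1 <;> omega
    · rw [h₂, bip, parts_ofMul_replicate_two_add_replicate_one]
      congr 1; omega

lemma eq_conj_rotCompl_iff (m : ℕ) (p q : Partition') :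
    ((∀ k, q.parts k ≤ 2) ∧ (∀ k, m ≤ k → q.parts k = 0) ∧ p = (rotCompl 2 m q).conj) ↔
      ∃ a b, a ≤ b ∧ b ≤ m ∧ p.parts = twoRowParts (m - a) (m - b) ∧
        q.parts = twoColumnParts a b := by
  constructor
  · rintro ⟨hq₂, hqm, rfl⟩
    obtain ⟨a, b, hab, hbm, hq⟩ := exists_parts_eq_twoColumn hq₂ hqm
    exact ⟨a, b, hab, hbm,
      parts_conj_of_twoColumn (by omega) (parts_rotCompl_two hab hbm hq), hq⟩
  · rintro ⟨a, b, hab, hbm, hp, hq⟩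
    refine ⟨fun k => ?_, fun k hk => ?_, ext_parts ?_⟩
    · simp only [hq, twoColumnParts]; split_ifs <;> omega
    · simp only [hq, twoColumnParts]; split_ifs <;> omega
    · rw [hp, parts_conj_of_twoColumn (by omega) (parts_rotCompl_two hab hbm hq)]

theorem decomposition_numbers_stmt7_general (n : ℕ) (hn : 3 ≤ n) (l : Bipartition) :
    l ∈ LB6 n ↔
      ((∀ k : ℕ, l.2.parts k ≤ 2) ∧ (∀ k : ℕ, n - 3 ≤ k → l.2.parts k = 0) ∧
        l.1 = (Partition'.rotCompl 2 (n - 3) l.2).conj) := by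
  obtain ⟨m, rfl⟩ := Nat.exists_eq_add_of_le' hn
  rw [Nat.add_sub_cancel, mem_LB6_add_three_iff, eq_conj_rotCompl_iff]

/-- A bipartition of `2n - 6` lies in `LB6 n` if and only if its second
component fits inside the rectangle `2^{n-3}` and its first component is the conjugate
of the 180°-rotation of the complement of the second inside that rectangle. -/
theorem decomposition_numbers_stmt7 (n : ℕ) (hn : 3 ≤ n) (l : Bipartition)
    (hsize : Bipartition.size l = 2 * n - 6) :
    l ∈ LB6 n ↔
      ((∀ k : ℕ, l.2.parts k ≤ 2) ∧ (∀ k : ℕ, n - 3 ≤ k → l.2.parts k = 0) ∧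
        l.1 = (Partition'.rotCompl 2 (n - 3) l.2).conj) :=
  decomposition_numbers_stmt7_general n hn l
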